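/- Let p be an odd prime, n ≥ 1, q = p^n, and let F(x) = x^{q − 2} be the inverse power function over GF(q). Let c ∈ GF(q) with c ∉ {0, 1, 4, 4^{-1}}. If χ(c² − 4c) = 1, χ(1 − 4c) = 1, and χ(c) = 1, then the c-differential spectrum of F is given by ω_0 = (q − 1)/2, ω_1 = 3, ω_2 = (q − 9)/2, ω_3 = 2, and ω_i = 0 for i ≥ 4. -/

import Mathlib

open Finset

/-- `cdelta F d c b` is the number of `x` in the finite field `F` with
`(x+1)^d - c * x^d = b`, i.e. the entry `δ_c(b)` of the `c`-DDT of `x ↦ x^d`. -/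
noncomputable def cdelta (F : Type*) [Field F] (d : ℕ) (c b : F) : ℕ :=
  Nat.card {x : F // (x + 1) ^ d - c * x ^ d = b}

/-- `comega F d c i` is the number of `b` in `F` with `δ_c(b) = i`,
i.e. the value `ω_i` of the `c`-differential spectrum of `x ↦ x^d`. -/
noncomputable def comega (F : Type*) [Field F] (d : ℕ) (c : F) (i : ℕ) : ℕ :=
  Nat.card {b : F // cdelta F d c b = i}

open scoped Classical in
/-- The quadratic character of `F`, valued in `ℤ`. -/
noncomputable def chi (F : Type*) [Field F] (x : F) : ℤ :=
  if x = 0 then 0 else if IsSquare x then 1 else -1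


/-! For `x ∉ {0, -1}` the equation `(x + 1)⁻¹ - c x⁻¹ = b` is the quadratic
`b x² + (b - 1 + c) x + c = 0`, which vanishes neither at `0` nor at `-1`, while `x = 0` and
`x = -1` only contribute to `b = 1` and `b = c`. Hence `δ(0) = 1` and, for `b ≠ 0`,
`δ(b) = [b = 1] + [b = c] + 1 + χ(D b)` with `D b = (b - c - 1)² - 4c`. The hypotheses on
`c² - 4c` and `1 - 4c` give `δ(1) = δ(c) = 3`; as `c` is a square, `D` has exactly two roots,
which are the remaining `b` with `δ(b) = 1`, and every other `δ(b)` is `0` or `2`. The identities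
`∑ ωᵢ = q` and `∑ i ωᵢ = q` then determine `ω₀` and `ω₂`. -/

theorem chi_eq_quadraticChar {K : Type*} [Field K] [Fintype K] [DecidableEq K] (x : K) :
    chi K x = quadraticChar K x := by
  simp only [chi, quadraticChar_apply, quadraticCharFun]
  congr

theorem quadraticChar_le_one {K : Type*} [Field K] [Fintype K] [DecidableEq K] (x : K) :
    quadraticChar K x ≤ 1 := by
  rcases eq_or_ne x 0 with rfl | hx
  · simp
  · rcases quadraticChar_dichotomy hx with h | h <;> simp [h]

theorem card_quadratic_roots {K : Type*} [Field K] [Fintype K] [DecidableEq K]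
    (hK : ringChar K ≠ 2) {a : K} (ha : a ≠ 0) (b c : K) :
    (Nat.card {x : K // a * (x * x) + b * x + c = 0} : ℤ) =
      quadraticChar K (discrim a b c) + 1 := by
  have : NeZero (2 : K) := ⟨Ring.two_ne_zero hK⟩
  let e : K ≃ K :=
    (Equiv.mulLeft₀ (2 * a) (mul_ne_zero two_ne_zero ha)).trans (Equiv.addRight b)
  have hroots : {x : K // a * (x * x) + b * x + c = 0} ≃ {y : K // y ^ 2 = discrim a b c} :=
    e.subtypeEquiv fun x => (quadratic_eq_zero_iff_discrim_eq_sq ha x).trans eq_comm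
  rw [Nat.card_congr hroots, ← quadraticChar_card_sqrts hK, Set.toFinset_card,
    Nat.card_eq_fintype_card]
  rfl

theorem two_lt_card_of_ringChar_ne_two {K : Type*} [Field K] [Fintype K] (hK : ringChar K ≠ 2) :
    2 < Fintype.card K := by
  have := FiniteField.odd_card_of_char_ne_two hK
  have := Fintype.one_lt_card (α := K)
  omega

theorem pow_card_sub_two_eq_inv {K : Type*} [Field K] [Fintype K] (hK : 2 < Fintype.card K)
    (x : K) : x ^ (Fintype.card K - 2) = x⁻¹ := by
  rcases eq_or_ne x 0 with rfl | hx
  · rw [inv_zero, zero_pow (by omega)]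
  · refine eq_inv_of_mul_eq_one_left ?_
    rw [← pow_succ, show Fintype.card K - 2 + 1 = Fintype.card K - 1 by omega]
    exact FiniteField.pow_card_sub_one_eq_one x hx

theorem cdelta_card_sub_two_eq {K : Type*} [Field K] [Fintype K] (hK : 2 < Fintype.card K)
    (c b : K) :
    cdelta K (Fintype.card K - 2) c b = Nat.card {x : K // (x + 1)⁻¹ - c * x⁻¹ = b} := by
  simp only [cdelta, pow_card_sub_two_eq_inv hK]

section Spectrum

variable {K : Type*} [Field K] {d : ℕ} {c : K} {m : ℕ}

theorem comega_eq_zero_of_le (hm : ∀ b, cdelta K d c b < m) {i : ℕ} (hi : m ≤ i) :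
    comega K d c i = 0 := by
  have : IsEmpty {b // cdelta K d c b = i} := ⟨fun ⟨b, hb⟩ => by have := hm b; omega⟩
  exact Nat.card_of_isEmpty

variable [Fintype K]

theorem sum_cdelta : ∑ b, cdelta K d c b = Fintype.card K := by
  classical
  simp only [cdelta, Nat.card_eq_fintype_card, Fintype.card_subtype]
  exact (card_eq_sum_card_fiberwise fun x _ => mem_univ _).symm

theorem sum_comega (hm : ∀ b, cdelta K d c b < m) :
    ∑ i ∈ range m, comega K d c i = Fintype.card K := by
  classical
  simp only [comega, Nat.card_eq_fintype_card, Fintype.card_subtype]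
  exact (card_eq_sum_card_fiberwise fun b _ => mem_range.mpr (hm b)).symm

theorem sum_mul_comega (hm : ∀ b, cdelta K d c b < m) :
    ∑ i ∈ range m, i * comega K d c i = Fintype.card K := by
  classical
  rw [← sum_cdelta, ← sum_fiberwise_of_maps_to fun b _ => mem_range.mpr (hm b)]
  refine sum_congr rfl fun i _ => ?_
  simp only [comega, Nat.card_eq_fintype_card, Fintype.card_subtype]
  rw [sum_const_nat fun b hb => (mem_filter.mp hb).2, mul_comm]

end Spectrum

section InverseDifference

variable {K : Type*} [Field K] {c : K}

theorem inv_add_one_sub_mul_inv_eq_iff (hc : c ≠ 0) {b x : K} :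
    (x + 1)⁻¹ - c * x⁻¹ = b ↔
      (x = 0 ∧ b = 1) ∨ (x = -1 ∧ b = c) ∨ b * (x * x) + (b - 1 + c) * x + c = 0 := by
  rcases eq_or_ne x 0 with rfl | hx0
  · simp [eq_comm, hc]
  rcases eq_or_ne x (-1) with rfl | hx1
  · have : b * (-1 * -1) + (b - 1 + c) * -1 + c = 1 := by ring
    rw [this]
    simp [eq_comm]
  have hx1' : x + 1 ≠ 0 := fun h => hx1 (eq_neg_of_add_eq_zero_left h)
  simp only [hx0, hx1, false_and, false_or]
  constructor
  · intro h
    field_simp at h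
    linear_combination -h
  · intro h
    field_simp
    linear_combination -h

variable [Finite K] [DecidableEq K]

theorem natCard_inv_fiber (hc : c ≠ 0) (b : K) :
    Nat.card {x : K // (x + 1)⁻¹ - c * x⁻¹ = b} =
      (if b = 1 then 1 else 0) + (if b = c then 1 else 0) +
        Nat.card {x : K // b * (x * x) + (b - 1 + c) * x + c = 0} := by
  have hfiber : {x : K | (x + 1)⁻¹ - c * x⁻¹ = b} =
      ({x | x = 0 ∧ b = 1} ∪ {x | x = -1 ∧ b = c}) ∪
        {x | b * (x * x) + (b - 1 + c) * x + c = 0} := by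
    ext x
    simp only [Set.mem_ofPred_eq, Set.mem_union, inv_add_one_sub_mul_inv_eq_iff hc, or_assoc]
  have hpoint : ∀ (y : K) (P : Prop) [Decidable P],
      {x : K | x = y ∧ P}.ncard = if P then 1 else 0 := by
    intro y P _
    split_ifs with hP <;> simp [hP]
  have hcard : ∀ P : K → Prop, Nat.card {x // P x} = {x | P x}.ncard :=
    fun P => Nat.card_coe_set_eq _
  rw [hcard, hcard, hfiber, Set.ncard_union_eq, Set.ncard_union_eq, hpoint, hpoint]
  · refine Set.disjoint_left.mpr ?_
    rintro x ⟨rfl, -⟩ ⟨h, -⟩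
    exact zero_ne_one (neg_eq_zero.mp h.symm).symm
  · refine Set.disjoint_left.mpr ?_
    rintro x (⟨rfl, -⟩ | ⟨rfl, -⟩) hroot <;> simp only [Set.mem_ofPred_eq] at hroot
    · exact hc (by linear_combination hroot)
    · exact one_ne_zero (by linear_combination hroot : (1 : K) = 0)

end InverseDifference

theorem discrim_one_sub_one_add {R : Type*} [CommRing R] (c : R) :
    discrim 1 (1 - 1 + c) c = c ^ 2 - 4 * c := by
  rw [discrim]; ring

theorem discrim_self_sub_one_add {R : Type*} [CommRing R] (c : R) :
    discrim c (c - 1 + c) c = 1 - 4 * c := by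
  rw [discrim]; ring

theorem card_discrim_eq_zero {K : Type*} [Field K] [Fintype K] [DecidableEq K]
    (hK : ringChar K ≠ 2) {c : K} (hc : quadraticChar K c = 1) :
    Nat.card {b : K // discrim b (b - 1 + c) c = 0} = 2 := by
  have hroots : {b : K // discrim b (b - 1 + c) c = 0} ≃
      {b : K // 1 * (b * b) + (-2 * (c + 1)) * b + (c - 1) ^ 2 = 0} :=
    Equiv.subtypeEquivRight fun b => by
      rw [discrim]; constructor <;> intro h <;> linear_combination h
  have h4 : (4 : K) ≠ 0 := by
    simpa [show (4 : K) = 2 ^ 2 by norm_num] using Ring.two_ne_zero hK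
  have hdisc : discrim 1 (-2 * (c + 1)) ((c - 1) ^ 2) = 4 ^ 2 * c := by rw [discrim]; ring
  have h := card_quadratic_roots hK one_ne_zero (-2 * (c + 1)) ((c - 1) ^ 2)
  rw [← Nat.card_congr hroots, hdisc, map_mul, quadraticChar_sq_one' h4, hc] at h
  exact_mod_cast h

section InversePower

variable {K : Type*} [Field K] [Fintype K] [DecidableEq K] {c : K}

theorem cdelta_inv_zero (hK : 2 < Fintype.card K) (hc0 : c ≠ 0) (hc1 : c ≠ 1) :
    cdelta K (Fintype.card K - 2) c 0 = 1 := by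
  rw [cdelta_card_sub_two_eq hK, natCard_inv_fiber hc0, if_neg zero_ne_one, if_neg hc0.symm,
    zero_add, zero_add, Nat.card_eq_one_iff_exists]
  have h1c : 1 - c ≠ 0 := sub_ne_zero.mpr hc1.symm
  refine ⟨⟨c / (1 - c), by field_simp; ring⟩, fun y => Subtype.ext ?_⟩
  exact (eq_div_iff h1c).mpr (by linear_combination -y.2)

theorem cdelta_inv_eq (hK : ringChar K ≠ 2) (hc0 : c ≠ 0) {b : K} (hb : b ≠ 0) :
    (cdelta K (Fintype.card K - 2) c b : ℤ) =
      (if b = 1 then 1 else 0) + (if b = c then 1 else 0) +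
        quadraticChar K (discrim b (b - 1 + c) c) + 1 := by
  rw [cdelta_card_sub_two_eq (two_lt_card_of_ringChar_ne_two hK), natCard_inv_fiber hc0]
  push_cast [apply_ite]
  rw [card_quadratic_roots hK hb, add_assoc]

theorem cdelta_inv_one (hK : ringChar K ≠ 2) (hc0 : c ≠ 0) (hc1 : c ≠ 1)
    (hA : quadraticChar K (c ^ 2 - 4 * c) = 1) :
    cdelta K (Fintype.card K - 2) c 1 = 3 := by
  have h := cdelta_inv_eq hK hc0 one_ne_zero
  rw [if_pos rfl, if_neg hc1.symm, discrim_one_sub_one_add, hA] at h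
  exact_mod_cast h

theorem cdelta_inv_self (hK : ringChar K ≠ 2) (hc0 : c ≠ 0) (hc1 : c ≠ 1)
    (hB : quadraticChar K (1 - 4 * c) = 1) :
    cdelta K (Fintype.card K - 2) c c = 3 := by
  have h := cdelta_inv_eq hK hc0 hc0
  rw [if_neg hc1, if_pos rfl, discrim_self_sub_one_add, hB] at h
  exact_mod_cast h

theorem cdelta_inv_of_ne (hK : ringChar K ≠ 2) (hc0 : c ≠ 0) {b : K} (hb0 : b ≠ 0)
    (hb1 : b ≠ 1) (hbc : b ≠ c) :
    (cdelta K (Fintype.card K - 2) c b : ℤ) = quadraticChar K (discrim b (b - 1 + c) c) + 1 := by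
  rw [cdelta_inv_eq hK hc0 hb0, if_neg hb1, if_neg hbc, zero_add, zero_add]

theorem cdelta_inv_lt_four (hK : ringChar K ≠ 2) (hc0 : c ≠ 0) (hc1 : c ≠ 1)
    (hA : quadraticChar K (c ^ 2 - 4 * c) = 1) (hB : quadraticChar K (1 - 4 * c) = 1) (b : K) :
    cdelta K (Fintype.card K - 2) c b < 4 := by
  by_cases hb0 : b = 0
  · rw [hb0, cdelta_inv_zero (two_lt_card_of_ringChar_ne_two hK) hc0 hc1]; norm_num
  by_cases hb1 : b = 1
  · rw [hb1, cdelta_inv_one hK hc0 hc1 hA]; norm_num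
  by_cases hbc : b = c
  · rw [hbc, cdelta_inv_self hK hc0 hc1 hB]; norm_num
  have h := cdelta_inv_of_ne hK hc0 hb0 hb1 hbc
  have := quadraticChar_le_one (discrim b (b - 1 + c) c)
  omega

theorem cdelta_inv_eq_three_iff (hK : ringChar K ≠ 2) (hc0 : c ≠ 0) (hc1 : c ≠ 1)
    (hA : quadraticChar K (c ^ 2 - 4 * c) = 1) (hB : quadraticChar K (1 - 4 * c) = 1) (b : K) :
    cdelta K (Fintype.card K - 2) c b = 3 ↔ b = 1 ∨ b = c := by
  refine ⟨fun h => ?_, ?_⟩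
  · by_contra! hb
    by_cases hb0 : b = 0
    · rw [hb0, cdelta_inv_zero (two_lt_card_of_ringChar_ne_two hK) hc0 hc1] at h
      omega
    have h' := cdelta_inv_of_ne hK hc0 hb0 hb.1 hb.2
    have := quadraticChar_le_one (discrim b (b - 1 + c) c)
    omega
  · rintro (rfl | rfl)
    · exact cdelta_inv_one hK hc0 hc1 hA
    · exact cdelta_inv_self hK hc0 hc1 hB

theorem cdelta_inv_eq_one_iff (hK : ringChar K ≠ 2) (hc0 : c ≠ 0) (hc1 : c ≠ 1)
    (hA : quadraticChar K (c ^ 2 - 4 * c) = 1) (hB : quadraticChar K (1 - 4 * c) = 1) (b : K) :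
    cdelta K (Fintype.card K - 2) c b = 1 ↔ b = 0 ∨ discrim b (b - 1 + c) c = 0 := by
  by_cases hb0 : b = 0
  · simp [hb0, cdelta_inv_zero (two_lt_card_of_ringChar_ne_two hK) hc0 hc1]
  have hne : ∀ x : K, quadraticChar K x = 1 → x ≠ 0 := fun x hx h => by simp [h] at hx
  rcases eq_or_ne b 1 with rfl | hb1
  · rw [cdelta_inv_one hK hc0 hc1 hA, discrim_one_sub_one_add]
    simp [hne _ hA]
  rcases eq_or_ne b c with rfl | hbc
  · rw [cdelta_inv_self hK hc0 hc1 hB, discrim_self_sub_one_add]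
    simp [hne _ hB, hc0]
  have h := cdelta_inv_of_ne hK hc0 hb0 hb1 hbc
  rw [or_iff_right hb0, ← quadraticChar_eq_zero_iff]
  omega

theorem comega_inv_three (hK : ringChar K ≠ 2) (hc0 : c ≠ 0) (hc1 : c ≠ 1)
    (hA : quadraticChar K (c ^ 2 - 4 * c) = 1) (hB : quadraticChar K (1 - 4 * c) = 1) :
    comega K (Fintype.card K - 2) c 3 = 2 := by
  rw [comega,
    Nat.card_congr (Equiv.subtypeEquivRight (cdelta_inv_eq_three_iff hK hc0 hc1 hA hB))]
  exact (Nat.card_coe_set_eq {1, c}).trans (Set.ncard_pair hc1.symm)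

theorem comega_inv_one (hK : ringChar K ≠ 2) (hc0 : c ≠ 0) (hc1 : c ≠ 1)
    (hA : quadraticChar K (c ^ 2 - 4 * c) = 1) (hB : quadraticChar K (1 - 4 * c) = 1)
    (hC : quadraticChar K c = 1) :
    comega K (Fintype.card K - 2) c 1 = 3 := by
  rw [comega,
    Nat.card_congr (Equiv.subtypeEquivRight (cdelta_inv_eq_one_iff hK hc0 hc1 hA hB))]
  have hD0 : discrim 0 (0 - 1 + c) c ≠ 0 := by
    rw [discrim, zero_sub, mul_zero, zero_mul, sub_zero, neg_add_eq_sub]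
    exact pow_ne_zero 2 (sub_ne_zero.mpr hc1)
  calc Nat.card {b : K // b = 0 ∨ discrim b (b - 1 + c) c = 0}
      = (insert 0 {b : K | discrim b (b - 1 + c) c = 0}).ncard := Nat.card_coe_set_eq _
    _ = Nat.card {b : K // discrim b (b - 1 + c) c = 0} + 1 :=
      Set.ncard_insert_of_notMem hD0 (Set.toFinite _)
    _ = 3 := by rw [card_discrim_eq_zero hK hC]

end InversePower

theorem stmt_10_general (p n : ℕ) (hpodd : Odd p)
    (F : Type*) [Field F] [Fintype F] (hF : Fintype.card F = p ^ n)
    (c : F) (hc0 : c ≠ 0) (hc1 : c ≠ 1)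
    (h1 : chi F (c ^ 2 - 4 * c) = 1) (h2 : chi F (1 - 4 * c) = 1) (h3 : chi F c = 1) :
    comega F (p ^ n - 2) c 0 = (p ^ n - 1) / 2 ∧
    comega F (p ^ n - 2) c 1 = 3 ∧
    comega F (p ^ n - 2) c 2 = (p ^ n - 9) / 2 ∧
    comega F (p ^ n - 2) c 3 = 2 ∧
    ∀ i, 4 ≤ i → comega F (p ^ n - 2) c i = 0 := by
  classical
  have hK : ringChar F ≠ 2 := fun h => by
    have := FiniteField.even_card_of_char_two h
    rw [hF, Nat.pow_mod, Nat.odd_iff.mp hpodd, one_pow] at this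
    omega
  rw [chi_eq_quadraticChar] at h1 h2 h3
  rw [← hF]
  have hlt := cdelta_inv_lt_four hK hc0 hc1 h1 h2
  have hω1 := comega_inv_one hK hc0 hc1 h1 h2 h3
  have hω3 := comega_inv_three hK hc0 hc1 h1 h2
  have hsum := sum_comega hlt
  have hsum_mul := sum_mul_comega hlt
  simp only [sum_range_succ, sum_range_zero] at hsum hsum_mul
  exact ⟨by omega, hω1, by omega, hω3, fun i hi => comega_eq_zero_of_le hlt hi⟩

theorem stmt_10 (p n : ℕ) (hp : p.Prime) (hpodd : Odd p) (hn : 1 ≤ n)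
    (F : Type*) [Field F] [Fintype F] (hF : Fintype.card F = p ^ n)
    (c : F) (hc0 : c ≠ 0) (hc1 : c ≠ 1) (hc4 : c ≠ 4) (hc4i : c ≠ (4 : F)⁻¹)
    (h1 : chi F (c ^ 2 - 4 * c) = 1) (h2 : chi F (1 - 4 * c) = 1) (h3 : chi F c = 1) :
    comega F (p ^ n - 2) c 0 = (p ^ n - 1) / 2 ∧
    comega F (p ^ n - 2) c 1 = 3 ∧
    comega F (p ^ n - 2) c 2 = (p ^ n - 9) / 2 ∧
    comega F (p ^ n - 2) c 3 = 2 ∧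
    ∀ i, 4 ≤ i → comega F (p ^ n - 2) c i = 0 :=
  stmt_10_general p n hpodd F hF c hc0 hc1 h1 h2 h3
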